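/- arXiv:1907.03533 — 2 statements merged into one kernel-verified Lean document; each statement's English description precedes it below -/
import Mathlib

section
/- For the evolutionary machine PT₁ started from the empty automaton, after any finite sequence of inputs, let m₁ be the maximum length of a string accepted so far (m₁ = 0 if none). Then every string z with |z| > m₁ that has not yet been processed is accepted when first input (i.e., running PT₁ on z results in acceptance). -/
/-- NFA₁: nondeterministic finite automata over Σ = {0,1} with at most one
transition per (state, letter) pair (hence transitions given by a partial function). -/
structure NFA1 where
  states : Finset ℕ
  start : ℕ
  trans : ℕ → Bool → Option ℕ
  accept : Finset ℕ

/-- Run the automaton, returning the halting/crash state together with the unread suffix. -/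
def runPartial (M : NFA1) : ℕ → List Bool → ℕ × List Bool
  | q, [] => (q, [])
  | q, a :: x =>
    match M.trans q a with
    | none => (q, a :: x)
    | some p => runPartial M p x

/-- `M` reads `x` completely and halts in an accepting state. -/
def NFA1.Accepts (M : NFA1) (x : List Bool) : Prop :=
  (runPartial M M.start x).2 = [] ∧ (runPartial M M.start x).1 ∈ M.accept

/-- `p` has a one-step transition into an accepting state. -/
def oneStepAcc (M : NFA1) (p : ℕ) : Bool :=
  ((M.trans p true).map (fun q => decide (q ∈ M.accept))).getD false ||
  ((M.trans p false).map (fun q => decide (q ∈ M.accept))).getD false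

/-- Case 3 of `Evolve`: append a chain of fresh states spelling `rest` from the crash state `p`,
with the final fresh state accepting. -/
def addChain (M : NFA1) (p : ℕ) (rest : List Bool) : NFA1 :=
  let base := (M.states.sup id) + 1
  { states := M.states ∪ (Finset.range rest.length).image (fun i => base + i)
    start := M.start
    trans := fun q a =>
      match (List.range rest.length).find? (fun i =>
          decide ((if i = 0 then p else base + (i - 1)) = q) && decide (rest[i]? = some a)) with
      | some i => some (base + i)
      | none => M.trans q a
    accept := M.accept ∪ {base + (rest.length - 1)} }

/-- The evolution operation on NFA₁ automata. -/
def Evolve (M : NFA1) (x : List Bool) : NFA1 :=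
  match runPartial M M.start x with
  | (p, []) =>
    if p ∈ M.accept then M
    else if oneStepAcc M p then M
    else { M with accept := insert p M.accept }
  | (p, rest) => addChain M p rest

/-- The empty automaton: a single state `q₀ = 0`, no transitions, no accepting states. -/
def emptyNFA : NFA1 := ⟨{0}, 0, fun _ _ => none, ∅⟩

/-- The state of PT₁ after processing the inputs `xs` in order, starting from the empty automaton. -/
def evolveAll (xs : List (List Bool)) : NFA1 := xs.foldl Evolve emptyNFA

/-- Running PT₁ on input `x` from automaton-state `M`: the automaton first evolves on `x`
and `x` is accepted iff the evolved automaton accepts it. -/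
def PT1AcceptB (M : NFA1) (x : List Bool) : Bool :=
  let M' := Evolve M x
  decide ((runPartial M' M'.start x).2 = []) && decide ((runPartial M' M'.start x).1 ∈ M'.accept)

/-!
Automata reachable from the empty one keep every transition inside their state set, so the chain
that `addChain` attaches consists of fresh states and does not disturb existing runs. If the run on
`z` crashes, the new chain completes it in an accepting state. If it reads `z` completely, ending in
`p`, then `p` is not accepting and has no transition into an accepting state, for otherwise `z` or
a one-letter extension of it would be an accepted string of length at least `|z|`; so `Evolve`
makes `p` accepting.
-/

structure NFA1.Closed (M : NFA1) : Prop where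
  start_mem : M.start ∈ M.states
  trans_mem : ∀ {q a r}, M.trans q a = some r → q ∈ M.states ∧ r ∈ M.states

section runPartial

variable {M M' : NFA1}

theorem runPartial_fst_mem (hM : M.Closed) {q : ℕ} (hq : q ∈ M.states) (x : List Bool) :
    (runPartial M q x).1 ∈ M.states := by
  induction x generalizing q with
  | nil => exact hq
  | cons a x ih =>
    simp only [runPartial]
    rcases h : M.trans q a with _ | r
    · exact hq
    · exact ih (hM.trans_mem h).2

theorem runPartial_append {q p : ℕ} {x : List Bool} (h : runPartial M q x = (p, []))
    (y : List Bool) : runPartial M q (x ++ y) = runPartial M p y := by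
  induction x generalizing q with
  | nil => cases h; rfl
  | cons a x ih =>
    simp only [runPartial, List.cons_append] at h ⊢
    rcases ht : M.trans q a with _ | r
    · simp [ht] at h
    · simp only [ht] at h ⊢
      exact ih h

theorem trans_eq_none_of_runPartial_eq_cons {q p : ℕ} {a : Bool} {t z : List Bool}
    (h : runPartial M q z = (p, a :: t)) : M.trans p a = none := by
  induction z generalizing q with
  | nil => simp [runPartial] at h
  | cons b x ih =>
    simp only [runPartial] at h
    rcases ht : M.trans q b with _ | r
    · simp only [ht, Prod.mk.injEq, List.cons.injEq] at h
      obtain ⟨rfl, rfl, rfl⟩ := h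
      exact ht
    · simp only [ht] at h
      exact ih h

theorem runPartial_of_trans_le (hle : ∀ {q a r}, M.trans q a = some r → M'.trans q a = some r)
    {q p : ℕ} {z rest : List Bool} (h : runPartial M q z = (p, rest)) :
    runPartial M' q z = runPartial M' p rest := by
  induction z generalizing q with
  | nil => cases h; rfl
  | cons a x ih =>
    simp only [runPartial] at h
    rcases ht : M.trans q a with _ | r
    · simp only [ht, Prod.mk.injEq] at h
      obtain ⟨rfl, rfl⟩ := h
      rfl
    · simp only [ht] at h
      simp only [runPartial, hle ht]
      exact ih h

end runPartial

theorem oneStepAcc_eq_true_iff {M : NFA1} {p : ℕ} :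
    oneStepAcc M p = true ↔ ∃ b q, M.trans p b = some q ∧ q ∈ M.accept := by
  simp only [oneStepAcc, Bool.or_eq_true, Bool.exists_bool]
  rcases M.trans p false with _ | q₁ <;> rcases M.trans p true with _ | q₂ <;>
    simp [or_comm]

section addChain

variable {M : NFA1} {p : ℕ} {rest : List Bool}

/-- The `i`-th state of the chain spelled by `addChain M p`; this is the source state tested in
its `find?`. -/
def chainNode (M : NFA1) (p i : ℕ) : ℕ :=
  if i = 0 then p else M.states.sup id + 1 + (i - 1)

theorem chainNode_injective (hp : p ≤ M.states.sup id) : Function.Injective (chainNode M p) := by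
  intro i j h
  simp only [chainNode] at h
  split_ifs at h <;> omega

theorem addChain_trans_chainNode (hp : p ≤ M.states.sup id) {i : ℕ} (hi : i < rest.length) :
    (addChain M p rest).trans (chainNode M p i) rest[i] = some (chainNode M p (i + 1)) := by
  simp only [addChain]
  split
  case h_1 j hfind =>
    obtain ⟨hpred, -, -⟩ := List.find?_range_eq_some.mp hfind
    simp only [Bool.and_eq_true, decide_eq_true_eq] at hpred
    rw [chainNode_injective hp hpred.1]
    simp [chainNode]
  case h_2 hfind =>
    have := List.find?_eq_none.mp hfind i (List.mem_range.mpr hi)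
    simp [chainNode] at this

theorem addChain_trans_of_trans_eq_some (hM : M.Closed) {a₀ : Bool} {t : List Bool}
    (hcrash : M.trans p a₀ = none) {q : ℕ} {a : Bool} {r : ℕ} (h : M.trans q a = some r) :
    (addChain M p (a₀ :: t)).trans q a = some r := by
  have hq : q ≤ M.states.sup id := Finset.le_sup (f := id) (hM.trans_mem h).1
  simp only [addChain]
  split
  case h_1 i hfind =>
    obtain ⟨hpred, -, -⟩ := List.find?_range_eq_some.mp hfind
    simp only [Bool.and_eq_true, decide_eq_true_eq] at hpred
    obtain ⟨hsrc, hletter⟩ := hpred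
    split_ifs at hsrc with hi
    · subst hi hsrc
      simp only [List.getElem?_cons_zero, Option.some.injEq] at hletter
      subst hletter
      simp [hcrash] at h
    · omega
  case h_2 => exact h

theorem runPartial_addChain (hp : p ≤ M.states.sup id) (hrest : rest ≠ []) :
    runPartial (addChain M p rest) p rest = (M.states.sup id + 1 + (rest.length - 1), []) := by
  have key : ∀ k i, i + k = rest.length →
      runPartial (addChain M p rest) (chainNode M p i) (rest.drop i) =
        (chainNode M p rest.length, []) := by
    intro k
    induction k with
    | zero =>
      intro i hi
      rw [List.drop_eq_nil_of_le (by omega), ← hi]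
      rfl
    | succ k ih =>
      intro i hi
      rw [List.drop_eq_getElem_cons (by omega)]
      simp only [runPartial, addChain_trans_chainNode hp (show i < rest.length by omega)]
      exact ih (i + 1) (by omega)
  have hlen : rest.length ≠ 0 := by simpa using hrest
  simpa [chainNode, hlen] using key rest.length 0 (by simp)

theorem addChain_closed (hM : M.Closed) (hp : p ∈ M.states) : (addChain M p rest).Closed := by
  refine ⟨Finset.mem_union_left _ hM.start_mem, fun {q a r} h => ?_⟩
  simp only [addChain] at h ⊢
  split at h
  case h_2 => exact (hM.trans_mem h).imp (Finset.mem_union_left _) (Finset.mem_union_left _)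
  case h_1 i hfind =>
    obtain ⟨hpred, hi, -⟩ := List.find?_range_eq_some.mp hfind
    simp only [Bool.and_eq_true, decide_eq_true_eq] at hpred
    have hi := List.mem_range.mp hi
    cases h
    refine ⟨?_, Finset.mem_union_right _ (Finset.mem_image_of_mem _ (Finset.mem_range.mpr hi))⟩
    rw [← hpred.1]
    split_ifs with hi0
    · exact Finset.mem_union_left _ hp
    · exact Finset.mem_union_right _ (Finset.mem_image_of_mem _ (Finset.mem_range.mpr (by omega)))

end addChain

theorem evolve_closed {M : NFA1} (hM : M.Closed) (x : List Bool) : (Evolve M x).Closed := by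
  have hp := runPartial_fst_mem hM hM.start_mem x
  unfold Evolve
  rcases hr : runPartial M M.start x with ⟨p, _ | ⟨a, t⟩⟩
  · dsimp only
    split_ifs <;> exact ⟨hM.start_mem, hM.trans_mem⟩
  · rw [hr] at hp
    exact addChain_closed hM hp

theorem evolveAll_closed (xs : List (List Bool)) : (evolveAll xs).Closed := by
  have hempty : emptyNFA.Closed := ⟨by simp [emptyNFA], fun h => by simp [emptyNFA] at h⟩
  unfold evolveAll
  induction xs using List.reverseRecOn with
  | nil => exact hempty
  | append_singleton xs x ih => simpa using evolve_closed ih x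

section PT1AcceptB

variable {M : NFA1} {z : List Bool} {p : ℕ}

theorem PT1AcceptB_of_runPartial_eq_cons (hM : M.Closed) {a : Bool} {t : List Bool}
    (hr : runPartial M M.start z = (p, a :: t)) : PT1AcceptB M z = true := by
  have hp : p ∈ M.states := by simpa [hr] using runPartial_fst_mem hM hM.start_mem z
  have hev : Evolve M z = addChain M p (a :: t) := by
    unfold Evolve
    rw [hr]
  have hrun : runPartial (addChain M p (a :: t)) M.start z =
      (M.states.sup id + 1 + ((a :: t).length - 1), []) := by
    rw [runPartial_of_trans_le
      (addChain_trans_of_trans_eq_some hM (trans_eq_none_of_runPartial_eq_cons hr)) hr]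
    exact runPartial_addChain (Finset.le_sup (f := id) hp) (List.cons_ne_nil a t)
  simp only [PT1AcceptB, hev]
  rw [show (addChain M p (a :: t)).start = M.start from rfl, hrun]
  simp [addChain]

theorem PT1AcceptB_of_runPartial_eq_nil (hr : runPartial M M.start z = (p, []))
    (hacc : p ∉ M.accept) (hos : oneStepAcc M p = false) : PT1AcceptB M z = true := by
  have hev : Evolve M z = { M with accept := insert p M.accept } := by
    unfold Evolve
    simp [hr, hacc, hos]
  have hrun : runPartial { M with accept := insert p M.accept } M.start z = (p, []) :=
    (runPartial_of_trans_le (M := M) (M' := { M with accept := insert p M.accept }) id hr).trans rfl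
  simp [PT1AcceptB, hev, hrun]

theorem exists_accepts_append_singleton (hr : runPartial M M.start z = (p, []))
    (hos : oneStepAcc M p = true) : ∃ b, M.Accepts (z ++ [b]) := by
  obtain ⟨b, q, hpq, hq⟩ := oneStepAcc_eq_true_iff.mp hos
  have hrun : runPartial M M.start (z ++ [b]) = (q, []) := by
    simp [runPartial_append hr, runPartial, hpq]
  exact ⟨b, by simp [NFA1.Accepts, hrun, hq]⟩

end PT1AcceptB

theorem long_unprocessed_strings_accepted_general (xs : List (List Bool)) (z : List Bool)
    (hlong : ∀ w, (evolveAll xs).Accepts w → w.length < z.length) :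
    PT1AcceptB (evolveAll xs) z = true := by
  set M := evolveAll xs
  rcases hr : runPartial M M.start z with ⟨p, _ | ⟨a, t⟩⟩
  · have hacc : p ∉ M.accept := fun hp =>
      (hlong z ⟨by simp [hr], by simpa [hr] using hp⟩).false
    have hos : oneStepAcc M p = false := by
      by_contra hos
      obtain ⟨b, hb⟩ := exists_accepts_append_singleton hr (by simpa using hos)
      simpa using hlong _ hb
    exact PT1AcceptB_of_runPartial_eq_nil hr hacc hos
  · exact PT1AcceptB_of_runPartial_eq_cons (evolveAll_closed xs) hr

/-- for PT₁ started from the empty automaton, after any finite sequence of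
inputs xs, every not-yet-processed string z longer than every string accepted so far
(in particular longer than m₁, hence nonempty) is accepted when first input. -/
theorem long_unprocessed_strings_accepted (xs : List (List Bool)) (z : List Bool)
    (hlong : ∀ w, (evolveAll xs).Accepts w → w.length < z.length)
    (hnew : z ∉ xs) (hz : 0 < z.length) :
    PT1AcceptB (evolveAll xs) z = true :=
  long_unprocessed_strings_accepted_general xs z hlong
end

section
/- For PT₁ started from the empty automaton, the set of accepted strings at any stage is finite, and for each length n there exists a stage and a sequence of inputs after which PT₁ rejects every string of length n that halts in a freshly-created intermediate state: specifically, if one inputs all strings of length n+1 in any order before any string of length n, then every string z of length n either crashes and is accepted with new states, or halts in a state one-step away from an accepting state and whose acceptance status is determined by the prior inputs. -/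
/-!
Every automaton reached from the empty one numbers its states so that transitions go from smaller
to larger states; hence an accepted word is no longer than the largest state, and only finitely
many words are accepted.

While all inputs have length `n + 1`, every state sits at a fixed depth from the start and every
accepting state at depth `n + 1`. So an input of length `n + 1` never halts one step before an
accepting state, and `Evolve` makes it accepted; acceptance survives all later evolution. Once
every word of length `n + 1` has been input, for `z` of length `n` the word `z ++ [true]` is
accepted, so `z` halts in a state with a transition into an accepting state, and `Evolve` leaves
the automaton unchanged on `z`.
-/

namespace NFA1

variable {M M' : NFA1} {p q r : ℕ} {a : Bool} {x y : List Bool}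

lemma runPartial_cons_eq_nil_iff :
    runPartial M q (a :: x) = (p, []) ↔
      ∃ r, M.trans q a = some r ∧ runPartial M r x = (p, []) := by
  rw [runPartial]
  cases M.trans q a <;> simp

lemma runPartial_singleton_eq_nil_iff : runPartial M q [a] = (p, []) ↔ M.trans q a = some p := by
  rw [runPartial_cons_eq_nil_iff]
  simp [runPartial]

lemma runPartial_append_eq_nil_iff :
    runPartial M q (x ++ y) = (p, []) ↔
      ∃ r, runPartial M q x = (r, []) ∧ runPartial M r y = (p, []) := by
  induction x generalizing q with
  | nil => simp [runPartial]
  | cons b x ih =>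
    simp only [List.cons_append, runPartial_cons_eq_nil_iff, ih]
    grind

lemma runPartial_congr (h : M.trans = M'.trans) : runPartial M = runPartial M' := by
  funext q x
  induction x generalizing q with
  | nil => rfl
  | cons b x ih => simp only [runPartial, h, ih]

lemma exists_append_of_runPartial_eq_cons (h : runPartial M q x = (p, a :: y)) :
    ∃ x₁, x = x₁ ++ a :: y ∧ runPartial M q x₁ = (p, []) ∧ M.trans p a = none := by
  induction x generalizing q with
  | nil => simp [runPartial] at h
  | cons b x ih =>
    rw [runPartial] at h
    cases htr : M.trans q b with
    | none =>
      simp only [htr, Prod.mk.injEq, List.cons.injEq] at h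
      obtain ⟨rfl, rfl, rfl⟩ := h
      exact ⟨[], rfl, rfl, htr⟩
    | some r =>
      simp only [htr] at h
      obtain ⟨x₁, rfl, h₁, hcr⟩ := ih h
      exact ⟨b :: x₁, rfl, runPartial_cons_eq_nil_iff.mpr ⟨r, htr, h₁⟩, hcr⟩

lemma runPartial_mono (hM : ∀ {q a r}, M.trans q a = some r → M'.trans q a = some r)
    (h : runPartial M q x = (p, [])) : runPartial M' q x = (p, []) := by
  induction x generalizing q with
  | nil => exact h
  | cons b x ih =>
    obtain ⟨r, htr, hr⟩ := runPartial_cons_eq_nil_iff.mp h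
    exact runPartial_cons_eq_nil_iff.mpr ⟨r, hM htr, ih hr⟩

lemma runPartial_mem {S : Set ℕ} (hS : ∀ {q a r}, M.trans q a = some r → r ∈ S)
    (hq : q ∈ S) (h : runPartial M q x = (p, [])) : p ∈ S := by
  induction x generalizing q with
  | nil => simp only [runPartial, Prod.mk.injEq] at h; exact h.1 ▸ hq
  | cons b x ih =>
    obtain ⟨r, htr, hr⟩ := runPartial_cons_eq_nil_iff.mp h
    exact ih (hS htr) hr

lemma runPartial_add_length_le (hM : ∀ {q a r}, M.trans q a = some r → q < r)
    (h : runPartial M q x = (p, [])) : q + x.length ≤ p := by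
  induction x generalizing q with
  | nil => simp only [runPartial, Prod.mk.injEq] at h; simp [h.1]
  | cons b x ih =>
    obtain ⟨r, htr, hr⟩ := runPartial_cons_eq_nil_iff.mp h
    have := ih hr
    have := hM htr
    simp only [List.length_cons]
    omega

lemma runPartial_depth {d : ℕ → ℕ} (hd : ∀ {q a r}, M.trans q a = some r → d r = d q + 1)
    (h : runPartial M q x = (p, [])) : d p = d q + x.length := by
  induction x generalizing q with
  | nil => simp only [runPartial, Prod.mk.injEq] at h; simp [h.1]
  | cons b x ih =>
    obtain ⟨r, htr, hr⟩ := runPartial_cons_eq_nil_iff.mp h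
    rw [ih hr, hd htr, List.length_cons]
    omega

lemma oneStepAcc_iff : oneStepAcc M p = true ↔ ∃ a r, M.trans p a = some r ∧ r ∈ M.accept := by
  unfold oneStepAcc
  cases h₁ : M.trans p true <;> cases h₀ : M.trans p false <;>
    simp [Bool.exists_bool, h₀, h₁, or_comm]

lemma accepts_iff : M.Accepts x ↔ ∃ p ∈ M.accept, runPartial M M.start x = (p, []) :=
  ⟨fun h => ⟨_, h.2, Prod.ext rfl h.1⟩, fun ⟨p, hp, h⟩ => ⟨by rw [h], by rwa [h]⟩⟩

lemma exists_oneStepAcc_of_accepts_append (h : M.Accepts (x ++ [a])) :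
    ∃ p, runPartial M M.start x = (p, []) ∧ oneStepAcc M p = true := by
  obtain ⟨r, hr, hrun⟩ := accepts_iff.mp h
  obtain ⟨p, hp, hstep⟩ := runPartial_append_eq_nil_iff.mp hrun
  exact ⟨p, hp, oneStepAcc_iff.mpr ⟨a, r, runPartial_singleton_eq_nil_iff.mp hstep, hr⟩⟩

structure WellFormed (M : NFA1) : Prop where
  start_mem : M.start ∈ M.states
  accept_subset : M.accept ⊆ M.states
  src_mem : ∀ {q a r}, M.trans q a = some r → q ∈ M.states
  tgt_mem : ∀ {q a r}, M.trans q a = some r → r ∈ M.states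
  lt_of_trans : ∀ {q a r}, M.trans q a = some r → q < r

lemma lt_sup_add_one (hq : q ∈ M.states) : q < M.states.sup id + 1 :=
  Nat.lt_succ_of_le (Finset.le_sup (f := id) hq)

lemma WellFormed.runPartial_mem (hW : M.WellFormed) (h : runPartial M M.start x = (p, [])) :
    p ∈ M.states :=
  NFA1.runPartial_mem (S := M.states) hW.tgt_mem hW.start_mem h

lemma WellFormed.length_le_of_accepts (hW : M.WellFormed) (h : M.Accepts x) :
    x.length ≤ M.states.sup id := by
  obtain ⟨p, hp, hrun⟩ := accepts_iff.mp h
  have := runPartial_add_length_le hW.lt_of_trans hrun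
  have := lt_sup_add_one (hW.accept_subset hp)
  omega

lemma WellFormed.finite_setOf_accepts (hW : M.WellFormed) : {x | M.Accepts x}.Finite :=
  (List.finite_length_le Bool (M.states.sup id)).subset fun _ hx => hW.length_le_of_accepts hx

lemma wellFormed_emptyNFA : emptyNFA.WellFormed :=
  ⟨Finset.mem_singleton_self 0, Finset.empty_subset _, nofun, nofun, nofun⟩

section AddChain

variable {rest : List Bool}

def chainState (M : NFA1) (p : ℕ) : ℕ → ℕ
  | 0 => p
  | i + 1 => M.states.sup id + 1 + i

lemma ite_eq_chainState (i : ℕ) :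
    (if i = 0 then p else M.states.sup id + 1 + (i - 1)) = M.chainState p i := by
  cases i <;> simp [chainState]

lemma chainState_injective (hp : p < M.states.sup id + 1) :
    Function.Injective (M.chainState p) := by
  rintro (_ | i) (_ | j) h <;> simp only [chainState] at h <;> omega

lemma chainState_lt_succ (hp : p < M.states.sup id + 1) (i : ℕ) :
    M.chainState p i < M.chainState p (i + 1) := by
  cases i <;> simp only [chainState] <;> omega

lemma addChain_trans_eq_some (h : (addChain M p rest).trans q a = some r) :
    (∃ i < rest.length, M.chainState p i = q ∧ r = M.chainState p (i + 1)) ∨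
      M.trans q a = some r := by
  simp only [addChain, ite_eq_chainState] at h
  split at h
  next i hf =>
    have hi := List.mem_range.mp (List.mem_of_find?_eq_some hf)
    have hP := List.find?_some hf
    simp only [Bool.and_eq_true, decide_eq_true_eq] at hP
    exact Or.inl ⟨i, hi, hP.1, (Option.some.inj h).symm⟩
  next => exact Or.inr h

lemma addChain_trans_chainState {i : ℕ} (hp : p < M.states.sup id + 1) (hi : i < rest.length) :
    (addChain M p rest).trans (M.chainState p i) rest[i] = some (M.chainState p (i + 1)) := by
  simp only [addChain, ite_eq_chainState]
  split
  next j hf =>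
    have hP := List.find?_some hf
    simp only [Bool.and_eq_true, decide_eq_true_eq] at hP
    rw [chainState_injective hp hP.1]
    rfl
  next hf =>
    have := List.find?_eq_none.mp hf i (List.mem_range.mpr hi)
    simp at this

lemma addChain_trans_of_trans (hW : M.WellFormed) (hcr : M.trans p a = none) {b : Bool}
    (h : M.trans q b = some r) : (addChain M p (a :: rest)).trans q b = some r := by
  simp only [addChain, ite_eq_chainState]
  split
  next i hf =>
    have hP := List.find?_some hf
    simp only [Bool.and_eq_true, decide_eq_true_eq] at hP
    obtain ⟨hq, hb⟩ := hP
    cases i with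
    | zero =>
      simp only [chainState, List.getElem?_cons_zero, Option.some.injEq] at hq hb
      subst hq hb
      simp [h] at hcr
    | succ i =>
      have := lt_sup_add_one (hW.src_mem h)
      simp only [chainState] at hq
      omega
  next => exact h

lemma addChain_runPartial_chainState {i : ℕ} (hp : p < M.states.sup id + 1)
    (hi : i ≤ rest.length) :
    runPartial (addChain M p rest) (M.chainState p i) (rest.drop i) =
      (M.chainState p rest.length, []) := by
  by_cases hlast : i = rest.length
  · subst hlast
    simp [runPartial]
  · rw [List.drop_eq_getElem_cons (by omega), runPartial_cons_eq_nil_iff]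
    exact ⟨_, addChain_trans_chainState hp (by omega),
      addChain_runPartial_chainState hp (show i + 1 ≤ rest.length by omega)⟩
termination_by rest.length - i

lemma mem_addChain_accept :
    r ∈ (addChain M p (a :: y)).accept ↔ r ∈ M.accept ∨ r = M.chainState p (y.length + 1) := by
  simp [addChain, chainState, or_comm]

lemma addChain_accepts (hW : M.WellFormed)
    (h : runPartial M M.start x = (p, a :: y)) : (addChain M p (a :: y)).Accepts x := by
  obtain ⟨x₁, rfl, h₁, hcr⟩ := exists_append_of_runPartial_eq_cons h
  have hp := lt_sup_add_one (hW.runPartial_mem h₁)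
  have hrun : runPartial (addChain M p (a :: y)) M.start (x₁ ++ a :: y) =
      (M.chainState p (y.length + 1), []) :=
    runPartial_append_eq_nil_iff.mpr ⟨p, runPartial_mono (addChain_trans_of_trans hW hcr) h₁,
      addChain_runPartial_chainState (i := 0) hp (Nat.zero_le _)⟩
  exact accepts_iff.mpr ⟨_, mem_addChain_accept.mpr (Or.inr rfl), hrun⟩

lemma chainState_mem_addChain_states (hp : p ∈ M.states) {i : ℕ} (hi : i ≤ rest.length) :
    M.chainState p i ∈ (addChain M p rest).states := by
  cases i with
  | zero => exact Finset.mem_union_left _ hp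
  | succ i => exact Finset.mem_union_right _ (Finset.mem_image_of_mem _ (by simpa using hi))

lemma wellFormed_addChain (hW : M.WellFormed) (hp : p ∈ M.states) :
    (addChain M p (a :: y)).WellFormed := by
  have hsub : M.states ⊆ (addChain M p (a :: y)).states := Finset.subset_union_left
  refine ⟨hsub hW.start_mem, fun r hr => ?_, fun h => ?_, fun h => ?_, fun h => ?_⟩
  · rcases mem_addChain_accept.mp hr with hr | rfl
    · exact hsub (hW.accept_subset hr)
    · exact chainState_mem_addChain_states hp (by simp)
  all_goals rcases addChain_trans_eq_some h with ⟨i, hi, rfl, rfl⟩ | h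
  · exact chainState_mem_addChain_states hp hi.le
  · exact hsub (hW.src_mem h)
  · exact chainState_mem_addChain_states hp hi
  · exact hsub (hW.tgt_mem h)
  · exact chainState_lt_succ (lt_sup_add_one hp) i
  · exact hW.lt_of_trans h

end AddChain

lemma evolve_eq_ite (h : runPartial M M.start x = (p, [])) :
    Evolve M x = if p ∈ M.accept then M
      else if oneStepAcc M p then M
      else { M with accept := insert p M.accept } := by
  rw [Evolve, h]

lemma evolve_eq_self_or_insert (h : runPartial M M.start x = (p, [])) :
    Evolve M x = M ∨ Evolve M x = { M with accept := insert p M.accept } := by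
  rw [evolve_eq_ite h]
  split_ifs <;> simp

lemma evolve_eq_addChain (h : runPartial M M.start x = (p, a :: y)) :
    Evolve M x = addChain M p (a :: y) := by
  rw [Evolve, h]

lemma evolve_eq_self_of_oneStepAcc (h : runPartial M M.start x = (p, [])) (hp : oneStepAcc M p) :
    Evolve M x = M := by
  rw [evolve_eq_ite h]
  simp [hp]

lemma WellFormed.evolve (hW : M.WellFormed) (x : List Bool) : (Evolve M x).WellFormed := by
  rcases hrun : runPartial M M.start x with ⟨p, _ | ⟨a, y⟩⟩
  · rcases evolve_eq_self_or_insert hrun with h | h <;> rw [h]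
    · exact hW
    · exact { hW with
        accept_subset := Finset.insert_subset (hW.runPartial_mem hrun) hW.accept_subset }
  · obtain ⟨x₁, -, h₁, -⟩ := exists_append_of_runPartial_eq_cons hrun
    rw [evolve_eq_addChain hrun]
    exact wellFormed_addChain hW (hW.runPartial_mem h₁)

lemma WellFormed.foldl_evolve (hW : M.WellFormed) (xs : List (List Bool)) :
    (xs.foldl Evolve M).WellFormed := by
  induction xs generalizing M with
  | nil => exact hW
  | cons x xs ih => exact ih (hW.evolve x)

section Graded

variable {n : ℕ}

def Graded (M : NFA1) (n : ℕ) : Prop :=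
  ∃ d : ℕ → ℕ, d M.start = 0 ∧ (∀ {q a r}, M.trans q a = some r → d r = d q + 1) ∧
    ∀ q ∈ M.accept, d q = n + 1

lemma graded_emptyNFA (n : ℕ) : emptyNFA.Graded n :=
  ⟨fun _ => 0, rfl, nofun, nofun⟩

lemma graded_addChain (hW : M.WellFormed) (hG : M.Graded n)
    (h : runPartial M M.start x = (p, a :: y)) (hx : x.length = n + 1) :
    (addChain M p (a :: y)).Graded n := by
  obtain ⟨d, hd₀, hd, hacc⟩ := hG
  obtain ⟨x₁, rfl, h₁, -⟩ := exists_append_of_runPartial_eq_cons h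
  have hp := lt_sup_add_one (hW.runPartial_mem h₁)
  have hdp : d p = x₁.length := by rw [runPartial_depth hd h₁, hd₀, zero_add]
  let d' q := if q < M.states.sup id + 1 then d q else d p + 1 + (q - (M.states.sup id + 1))
  have hd'_old : ∀ q ∈ M.states, d' q = d q := fun q hq => if_pos (lt_sup_add_one hq)
  have hd'_chain : ∀ i, d' (M.chainState p i) = d p + i := by
    rintro (_ | i)
    · exact if_pos hp
    · simp only [d', chainState]
      rw [if_neg (by omega)]
      omega
  refine ⟨d', (hd'_old _ hW.start_mem).trans hd₀, fun htr => ?_, fun q hq => ?_⟩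
  · rcases addChain_trans_eq_some htr with ⟨i, -, rfl, rfl⟩ | htr
    · rw [hd'_chain, hd'_chain, add_assoc]
    · rw [hd'_old _ (hW.src_mem htr), hd'_old _ (hW.tgt_mem htr)]
      exact hd htr
  · rcases mem_addChain_accept.mp hq with hq | rfl
    · rw [hd'_old _ (hW.accept_subset hq)]
      exact hacc q hq
    · rw [hd'_chain, hdp, ← hx]
      simp

lemma Graded.evolve (hW : M.WellFormed) (hG : M.Graded n) (hx : x.length = n + 1) :
    (Evolve M x).Graded n := by
  rcases hrun : runPartial M M.start x with ⟨p, _ | ⟨a, y⟩⟩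
  · obtain ⟨d, hd₀, hd, hacc⟩ := hG
    rcases evolve_eq_self_or_insert hrun with h | h <;> rw [h]
    · exact ⟨d, hd₀, hd, hacc⟩
    · refine ⟨d, hd₀, hd, fun q hq => ?_⟩
      rcases Finset.mem_insert.mp hq with rfl | hq
      · rw [runPartial_depth hd hrun, hd₀, hx, zero_add]
      · exact hacc q hq
  · rw [evolve_eq_addChain hrun]
    exact graded_addChain hW hG hrun hx

lemma Graded.foldl_evolve (hW : M.WellFormed) (hG : M.Graded n) {xs : List (List Bool)}
    (hxs : ∀ x ∈ xs, x.length = n + 1) : (xs.foldl Evolve M).Graded n := by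
  induction xs generalizing M with
  | nil => exact hG
  | cons x xs ih =>
    exact ih (hW.evolve x) (hG.evolve hW (hxs x (by simp))) fun y hy => hxs y (by simp [hy])

lemma Graded.evolve_accepts (hW : M.WellFormed) (hG : M.Graded n) (hx : x.length = n + 1) :
    (Evolve M x).Accepts x := by
  rcases hrun : runPartial M M.start x with ⟨p, _ | ⟨a, y⟩⟩
  · rw [evolve_eq_ite hrun]
    split_ifs with hacc hone
    · exact accepts_iff.mpr ⟨p, hacc, hrun⟩
    · -- `p` is at depth `n + 1`, as is every accepting state, so none is one step after `p`
      obtain ⟨d, hd₀, hd, hdacc⟩ := hG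
      obtain ⟨b, r, htr, hr⟩ := oneStepAcc_iff.mp hone
      have := runPartial_depth hd hrun
      have := hd htr
      have := hdacc r hr
      omega
    · refine accepts_iff.mpr ⟨p, Finset.mem_insert_self p _, ?_⟩
      rwa [runPartial_congr (M := { M with accept := insert p M.accept }) (M' := M) rfl]
  · rw [evolve_eq_addChain hrun]
    exact addChain_accepts hW hrun

end Graded

structure Extends (M M' : NFA1) : Prop where
  start_eq : M'.start = M.start
  trans_of_trans : ∀ {q a r}, M.trans q a = some r → M'.trans q a = some r
  accept_subset : M.accept ⊆ M'.accept

lemma Extends.refl (M : NFA1) : M.Extends M := ⟨rfl, id, subset_rfl⟩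

lemma Extends.trans {M'' : NFA1} (h : M.Extends M') (h' : M'.Extends M'') : M.Extends M'' :=
  ⟨h'.start_eq.trans h.start_eq, h'.trans_of_trans ∘ h.trans_of_trans,
    h.accept_subset.trans h'.accept_subset⟩

lemma Extends.accepts (hM : M.Extends M') (h : M.Accepts x) : M'.Accepts x := by
  obtain ⟨p, hp, hrun⟩ := accepts_iff.mp h
  rw [accepts_iff, hM.start_eq]
  exact ⟨p, hM.accept_subset hp, runPartial_mono hM.trans_of_trans hrun⟩

lemma extends_evolve (hW : M.WellFormed) (x : List Bool) : M.Extends (Evolve M x) := by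
  rcases hrun : runPartial M M.start x with ⟨p, _ | ⟨a, y⟩⟩
  · rcases evolve_eq_self_or_insert hrun with h | h <;> rw [h]
    · exact Extends.refl M
    · exact ⟨rfl, id, Finset.subset_insert _ _⟩
  · obtain ⟨-, -, -, hcr⟩ := exists_append_of_runPartial_eq_cons hrun
    rw [evolve_eq_addChain hrun]
    exact ⟨rfl, addChain_trans_of_trans hW hcr, fun r hr => mem_addChain_accept.mpr (Or.inl hr)⟩

lemma extends_foldl_evolve (hW : M.WellFormed) (xs : List (List Bool)) :
    M.Extends (xs.foldl Evolve M) := by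
  induction xs generalizing M with
  | nil => exact Extends.refl M
  | cons x xs ih => exact (extends_evolve hW x).trans (ih (hW.evolve x))

end NFA1

open NFA1

lemma wellFormed_evolveAll (xs : List (List Bool)) : (evolveAll xs).WellFormed :=
  wellFormed_emptyNFA.foldl_evolve xs

lemma evolveAll_accepts_of_mem {n : ℕ} {ys : List (List Bool)} (hys : ∀ y ∈ ys, y.length = n + 1)
    {x : List Bool} (hx : x ∈ ys) : (evolveAll ys).Accepts x := by
  obtain ⟨u, v, rfl⟩ := List.append_of_mem hx
  have hu : ∀ y ∈ u, y.length = n + 1 := fun y hy => hys y (by simp [hy])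
  have hW := wellFormed_emptyNFA.foldl_evolve u
  have hacc := (graded_emptyNFA n).foldl_evolve wellFormed_emptyNFA hu |>.evolve_accepts hW
    (hys x (by simp))
  rw [evolveAll, List.foldl_append, List.foldl_cons]
  exact (extends_foldl_evolve (hW.evolve x) v).accepts hacc

/-- the set of strings accepted by PT₁ at any stage is finite; and if all
strings of length n+1 are input (in any order) before any string of length n, then every
string z of length n either crashes (and is accepted via fresh states), or halts in a
state that is accepting or one step away from an accepting state, its status being
determined by the prior inputs (the automaton is left unchanged). -/
theorem pt1_finite_and_length_saturation :
    (∀ xs : List (List Bool), Set.Finite {w : List Bool | (evolveAll xs).Accepts w}) ∧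
    ∀ (n : ℕ) (ys : List (List Bool)),
      (∀ y ∈ ys, y.length = n + 1) →
      (∀ y : List Bool, y.length = n + 1 → y ∈ ys) →
      ∀ z : List Bool, z.length = n →
        ((runPartial (evolveAll ys) (evolveAll ys).start z).2 ≠ [] ∧
            (Evolve (evolveAll ys) z).Accepts z) ∨
        (∃ p, runPartial (evolveAll ys) (evolveAll ys).start z = (p, []) ∧
            (p ∈ (evolveAll ys).accept ∨ oneStepAcc (evolveAll ys) p = true) ∧
            Evolve (evolveAll ys) z = evolveAll ys) := by
  refine ⟨fun xs => (wellFormed_evolveAll xs).finite_setOf_accepts, ?_⟩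
  intro n ys hys hall z hz
  have hzt : (evolveAll ys).Accepts (z ++ [true]) :=
    evolveAll_accepts_of_mem hys (hall _ (by simp [hz]))
  obtain ⟨p, hrun, hp⟩ := exists_oneStepAcc_of_accepts_append hzt
  exact Or.inr ⟨p, hrun, Or.inr hp, evolve_eq_self_of_oneStepAcc hrun hp⟩
end
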